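/- Let Q be an m×n matrix with orthonormal columns and W positive definite symmetric with κ(W)² < 2 and ‖W‖_∞² < 2. If the Gaussian-type measurement map A^{(G)} built from the rows of G = QW (scaled by √m appropriately) satisfies the Frobenius-robust rank NSP of order r w.r.t. ℓ_q with constants ρ = 1/2 and τ, then the tight-frame measurement map A^{(Q)} built from the rows of √m·Q satisfies the Frobenius-robust rank NSP of order r w.r.t. ℓ_q with constants κ(W)²/2 < 1 and 2τ. -/

import Mathlib

/-!
Put `N = W⁻¹ M W⁻¹`, so that `M = W N W` and `A^{(Q)}(M) = A^{(G)}(N)`. Comparing the top `i + 1`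
right singular vectors of one map with the bottom `n - i` of the other (Courant–Fischer) gives
`σ_i(M) ≤ ‖W‖² σ_i(N)` and `σ_i(N) ≤ ‖W⁻¹‖² σ_i(M)`, where `‖W‖ = λ_max(W)` and
`‖W⁻¹‖ = 1 / λ_min(W)`. Hence the null space property of `A^{(G)}` applied to `N` yields that of
`A^{(Q)}` with constants `κ(W)² / 2` and `‖W‖² τ ≤ 2 τ`.
-/

open scoped BigOperators
open MeasureTheory Matrix
open scoped ComplexOrder

noncomputable section

namespace RT

instance {n m : ℕ} : MeasurableSpace (Matrix (Fin n) (Fin m) ℝ) :=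
  inferInstanceAs (MeasurableSpace (Fin n → Fin m → ℝ))

/-- the values of a real tuple sorted in nonincreasing order -/
def sortDesc {n : ℕ} (f : Fin n → ℝ) : Fin n → ℝ :=
  fun i => - ((fun j => - f j) ∘ (Tuple.sort (fun j => - f j))) i

/-- singular values of a square complex matrix, in nonincreasing order -/
def singVals {n : ℕ} (M : Matrix (Fin n) (Fin n) ℂ) : Fin n → ℝ :=
  sortDesc (fun i =>
    Real.sqrt ((Matrix.isHermitian_conjTranspose_mul_self M).eigenvalues i))

/-- `‖M_r‖_F`: Frobenius norm of the `r` largest singular values -/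
def headFro {n : ℕ} (M : Matrix (Fin n) (Fin n) ℂ) (r : ℕ) : ℝ :=
  Real.sqrt (∑ i : Fin n, if (i : ℕ) < r then (singVals M i) ^ 2 else 0)

/-- `‖M_{r,c}‖_F`: Frobenius norm of the tail singular values -/
def tailFro {n : ℕ} (M : Matrix (Fin n) (Fin n) ℂ) (r : ℕ) : ℝ :=
  Real.sqrt (∑ i : Fin n, if r ≤ (i : ℕ) then (singVals M i) ^ 2 else 0)

/-- `‖M_r‖_*`: sum of the `r` largest singular values -/
def headNuc {n : ℕ} (M : Matrix (Fin n) (Fin n) ℂ) (r : ℕ) : ℝ :=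
  ∑ i : Fin n, if (i : ℕ) < r then singVals M i else 0

/-- `‖M_{r,c}‖_*`: sum of the singular values beyond the `r` largest -/
def tailNuc {n : ℕ} (M : Matrix (Fin n) (Fin n) ℂ) (r : ℕ) : ℝ :=
  ∑ i : Fin n, if r ≤ (i : ℕ) then singVals M i else 0

/-- nuclear norm -/
def nucNorm {n : ℕ} (M : Matrix (Fin n) (Fin n) ℂ) : ℝ :=
  ∑ i : Fin n, singVals M i

/-- Frobenius norm -/
def froNorm {n : ℕ} (M : Matrix (Fin n) (Fin n) ℂ) : ℝ :=
  Real.sqrt (∑ i : Fin n, (singVals M i) ^ 2)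

/-- `ℓ_q` norm on `ℝ^m` -/
def lqNorm {m : ℕ} (q : ℝ) (v : Fin m → ℝ) : ℝ :=
  (∑ j : Fin m, |v j| ^ q) ^ (1 / q)

/-- the Frobenius-robust rank null space property of order `r` with
constants `ρ`, `τ` with respect to `ℓ_q`, for a map on Hermitian matrices -/
def FrobRobustNSP {n m : ℕ} (A : Matrix (Fin n) (Fin n) ℂ → (Fin m → ℝ))
    (q : ℝ) (r : ℕ) (ρ τ : ℝ) : Prop :=
  ∀ M : Matrix (Fin n) (Fin n) ℂ, M.IsHermitian →
    headFro M r ≤ (ρ / Real.sqrt r) * tailNuc M r + τ * lqNorm q (A M)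

/-- rank one measurement map with real measurement vectors `a j`,
acting on complex Hermitian matrices: `X ↦ (tr(X a_j a_j^*))_j` -/
def measR {n m : ℕ} (a : Fin m → Fin n → ℝ) (X : Matrix (Fin n) (Fin n) ℂ) :
    Fin m → ℝ :=
  fun j => (Matrix.trace (X *
    Matrix.vecMulVec (fun k => (a j k : ℂ)) (fun k => (a j k : ℂ)))).re

/-- rank one measurement map with complex measurement vectors `a j`:
`X ↦ (tr(X a_j a_j^*))_j` -/
def measC {n m : ℕ} (a : Fin m → Fin n → ℂ) (X : Matrix (Fin n) (Fin n) ℂ) :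
    Fin m → ℝ :=
  fun j => (Matrix.trace (X * Matrix.vecMulVec (a j) (star (a j)))).re

/-- largest eigenvalue of a (Hermitian) matrix (junk value `0` otherwise) -/
def eigMax {𝕜 : Type*} [RCLike 𝕜] {n : ℕ} (M : Matrix (Fin n) (Fin n) 𝕜) : ℝ := by
  classical exact if h : M.IsHermitian then ⨆ i, h.eigenvalues i else 0

/-- smallest eigenvalue of a (Hermitian) matrix (junk value `0` otherwise) -/
def eigMin {𝕜 : Type*} [RCLike 𝕜] {n : ℕ} (M : Matrix (Fin n) (Fin n) 𝕜) : ℝ := by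
  classical exact if h : M.IsHermitian then ⨅ i, h.eigenvalues i else 0

/-- positive semidefinite square root (junk value `0` if not psd) -/
def psdSqrt {n : ℕ} (M : Matrix (Fin n) (Fin n) ℝ) : Matrix (Fin n) (Fin n) ℝ := by
  classical exact if h : M.PosSemidef then (h.1.eigenvectorUnitary.1 * diagonal ((↑) ∘ (√·) ∘ h.1.eigenvalues) *
    (star h.1.eigenvectorUnitary : Matrix (Fin n) (Fin n) ℝ)) else 0

/-- the law of an `n × m` matrix with i.i.d. standard Gaussian entries -/
def gaussMatrix (n m : ℕ) : Measure (Matrix (Fin n) (Fin m) ℝ) :=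
  Measure.pi fun _ : Fin n => Measure.pi fun _ : Fin m =>
    ProbabilityTheory.gaussianReal 0 1

/-- `μ` is the uniform (Haar) distribution on the Stiefel manifold `V_n^m`:
a probability measure carried by `{Q : Qᵀ Q = 1}` which is invariant under
left multiplication by orthogonal matrices. -/
def IsHaarStiefel {m n : ℕ} (μ : Measure (Matrix (Fin m) (Fin n) ℝ)) : Prop :=
  IsProbabilityMeasure μ ∧
    μ {Q | Qᵀ * Q = 1} = 1 ∧
    ∀ O : Matrix (Fin m) (Fin m) ℝ, Oᵀ * O = 1 →
      Measure.map (fun Q => O * Q) μ = μ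

end RT

instance (n m : ℕ) : MeasureTheory.IsProbabilityMeasure (RT.gaussMatrix n m) := by
  unfold RT.gaussMatrix
  exact MeasureTheory.Measure.pi.instIsProbabilityMeasure _

open Module RCLike Submodule

lemma Submodule.exists_ne_zero_mem_of_finrank_lt {K V : Type*} [DivisionRing K] [AddCommGroup V]
    [Module K V] [FiniteDimensional K V] {S T : Submodule K V}
    (h : finrank K V < finrank K S + finrank K T) : ∃ x ∈ S, x ∈ T ∧ x ≠ 0 := by
  by_contra! hST
  exact h.not_ge (finrank_add_finrank_le_of_disjoint (disjoint_def.mpr hST))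

namespace OrthonormalBasis

variable {𝕜 : Type*} [RCLike 𝕜] {E : Type*} [NormedAddCommGroup E] [InnerProductSpace 𝕜 E]
  {ι : Type*} [Fintype ι] (b : OrthonormalBasis ι 𝕜 E)

lemma inner_eq_zero_of_mem_span {s : Set ι} {k : ι} (hk : k ∉ s) {x : E}
    (hx : x ∈ span 𝕜 (Set.range fun j : s => b j)) : inner 𝕜 (b k) x = 0 := by
  refine (span_le (p := LinearMap.ker (innerₛₗ 𝕜 (b k)))).mpr ?_ hx
  rintro _ ⟨j, rfl⟩
  exact b.orthonormal.2 fun h => hk (h ▸ j.2)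

lemma finrank_span_range_restrict (s : Set ι) [Fintype s] :
    finrank 𝕜 (span 𝕜 (Set.range fun j : s => b j)) = Fintype.card s :=
  finrank_span_eq_card (b.orthonormal.linearIndependent.comp _ Subtype.val_injective)

end OrthonormalBasis

namespace LinearMap.IsSymmetric

variable {𝕜 : Type*} [RCLike 𝕜] {E : Type*} [NormedAddCommGroup E] [InnerProductSpace 𝕜 E]
  {T : E →ₗ[𝕜] E}

section Eigenbasis

variable {ι : Type*} [Fintype ι]

lemma norm_apply_sq_eq_sum (hT : T.IsSymmetric) (b : OrthonormalBasis ι 𝕜 E) (μ : ι → ℝ)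
    (hb : ∀ j, T (b j) = (μ j : 𝕜) • b j) (x : E) :
    ‖T x‖ ^ 2 = ∑ j, μ j ^ 2 * ‖inner 𝕜 (b j) x‖ ^ 2 := by
  rw [← b.sum_sq_norm_inner_right]
  refine Finset.sum_congr rfl fun j _ => ?_
  rw [← hT, hb, inner_smul_left, RCLike.conj_ofReal, norm_mul, mul_pow, RCLike.norm_ofReal,
    sq_abs]

lemma norm_apply_le_of_abs_le (hT : T.IsSymmetric) (b : OrthonormalBasis ι 𝕜 E) {μ : ι → ℝ}
    (hb : ∀ j, T (b j) = (μ j : 𝕜) • b j) {c : ℝ} (hc : 0 ≤ c) (hμ : ∀ j, |μ j| ≤ c) (x : E) :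
    ‖T x‖ ≤ c * ‖x‖ := by
  refine (pow_le_pow_iff_left₀ (norm_nonneg _) (by positivity) two_ne_zero).mp ?_
  rw [hT.norm_apply_sq_eq_sum b μ hb, mul_pow, ← b.sum_sq_norm_inner_right, Finset.mul_sum]
  refine Finset.sum_le_sum fun j _ => mul_le_mul_of_nonneg_right ?_ (sq_nonneg _)
  exact sq_le_sq' (neg_le_of_abs_le (hμ j)) (le_of_abs_le (hμ j))

lemma mul_norm_le_norm_apply (hT : T.IsSymmetric) (b : OrthonormalBasis ι 𝕜 E) {μ : ι → ℝ}
    (hb : ∀ j, T (b j) = (μ j : 𝕜) • b j) {c : ℝ} (hc : 0 ≤ c) (hμ : ∀ j, c ≤ |μ j|) (x : E) :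
    c * ‖x‖ ≤ ‖T x‖ := by
  refine (pow_le_pow_iff_left₀ (by positivity) (norm_nonneg _) two_ne_zero).mp ?_
  rw [hT.norm_apply_sq_eq_sum b μ hb, mul_pow, ← b.sum_sq_norm_inner_right, Finset.mul_sum]
  refine Finset.sum_le_sum fun j _ => mul_le_mul_of_nonneg_right ?_ (sq_nonneg _)
  rw [← sq_abs (μ j)]
  exact pow_le_pow_left₀ hc (hμ j) 2

end Eigenbasis

variable [FiniteDimensional 𝕜 E] {n : ℕ}

lemma re_inner_apply_self_eq_sum (hT : T.IsSymmetric) (hn : finrank 𝕜 E = n) (x : E) :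
    re (inner 𝕜 (T x) x) =
      ∑ k, hT.eigenvalues hn k * ‖inner 𝕜 (hT.eigenvectorBasis hn k) x‖ ^ 2 := by
  rw [← (hT.eigenvectorBasis hn).repr.inner_map_map, PiLp.inner_apply, map_sum]
  refine Finset.sum_congr rfl fun k _ => ?_
  rw [hT.eigenvectorBasis_apply_self_apply, OrthonormalBasis.repr_apply_apply]
  simp only [RCLike.inner_apply]
  rw [(starRingEnd 𝕜).map_mul, RCLike.conj_ofReal, mul_left_comm, RCLike.mul_conj,
    ← RCLike.ofReal_pow, ← RCLike.ofReal_mul, RCLike.ofReal_re]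

lemma mul_norm_sq_le_re_inner_of_mem_span (hT : T.IsSymmetric) (hn : finrank 𝕜 E = n)
    {s : Set (Fin n)} {μ : ℝ} (hμ : ∀ k ∈ s, μ ≤ hT.eigenvalues hn k) {x : E}
    (hx : x ∈ span 𝕜 (Set.range fun k : s => hT.eigenvectorBasis hn k)) :
    μ * ‖x‖ ^ 2 ≤ re (inner 𝕜 (T x) x) := by
  rw [hT.re_inner_apply_self_eq_sum hn, ← (hT.eigenvectorBasis hn).sum_sq_norm_inner_right,
    Finset.mul_sum]
  refine Finset.sum_le_sum fun k _ => ?_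
  by_cases hk : k ∈ s
  · exact mul_le_mul_of_nonneg_right (hμ k hk) (sq_nonneg _)
  · simp [OrthonormalBasis.inner_eq_zero_of_mem_span _ hk hx]

lemma re_inner_le_mul_norm_sq_of_mem_span (hT : T.IsSymmetric) (hn : finrank 𝕜 E = n)
    {s : Set (Fin n)} {μ : ℝ} (hμ : ∀ k ∈ s, hT.eigenvalues hn k ≤ μ) {x : E}
    (hx : x ∈ span 𝕜 (Set.range fun k : s => hT.eigenvectorBasis hn k)) :
    re (inner 𝕜 (T x) x) ≤ μ * ‖x‖ ^ 2 := by
  rw [hT.re_inner_apply_self_eq_sum hn, ← (hT.eigenvectorBasis hn).sum_sq_norm_inner_right,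
    Finset.mul_sum]
  refine Finset.sum_le_sum fun k _ => ?_
  by_cases hk : k ∈ s
  · exact mul_le_mul_of_nonneg_right (hμ k hk) (sq_nonneg _)
  · simp [OrthonormalBasis.inner_eq_zero_of_mem_span _ hk hx]

end LinearMap.IsSymmetric

namespace LinearMap

variable {𝕜 : Type*} [RCLike 𝕜]
  {E F E' F' : Type*} [NormedAddCommGroup E] [InnerProductSpace 𝕜 E] [FiniteDimensional 𝕜 E]
  [NormedAddCommGroup F] [InnerProductSpace 𝕜 F] [FiniteDimensional 𝕜 F]
  [NormedAddCommGroup E'] [InnerProductSpace 𝕜 E'] [FiniteDimensional 𝕜 E']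
  [NormedAddCommGroup F'] [InnerProductSpace 𝕜 F'] [FiniteDimensional 𝕜 F']

lemma re_inner_adjoint_comp_self_apply (f : E →ₗ[𝕜] F) (x : E) :
    re (inner 𝕜 ((adjoint f ∘ₗ f) x) x) = ‖f x‖ ^ 2 := by
  rw [comp_apply, adjoint_inner_left, inner_self_eq_norm_sq]

theorem singularValues_le_mul_of_norm_le (f : E →ₗ[𝕜] F) (f' : E' →ₗ[𝕜] F') (e : E ≃ₗ[𝕜] E')
    {a b : ℝ} (ha : 0 ≤ a) (hf : ∀ x, ‖f x‖ ≤ a * ‖f' (e x)‖) (he : ∀ x, ‖e x‖ ≤ b * ‖x‖)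
    (i : ℕ) : f.singularValues i ≤ a * b * f'.singularValues i := by
  set n := finrank 𝕜 E with hn
  have hn' : finrank 𝕜 E' = n := e.finrank_eq.symm
  by_cases hi : n ≤ i
  · rw [f.singularValues_of_finrank_le hi, f'.singularValues_of_finrank_le (hn' ▸ hi), mul_zero]
  push Not at hi
  set hS := f.isSymmetric_adjoint_comp_self
  set hS' := f'.isSymmetric_adjoint_comp_self
  -- `S` has dimension `i + 1` and `e⁻¹ T` dimension `n - i`, so they meet nontrivially.
  obtain ⟨x, hxS, hxT, hx0⟩ := Submodule.exists_ne_zero_mem_of_finrank_lt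
    (S := span 𝕜 (Set.range fun k : Set.Iic (⟨i, hi⟩ : Fin n) => hS.eigenvectorBasis hn.symm k))
    (T := (span 𝕜 (Set.range fun k : Set.Ici (⟨i, hi⟩ : Fin n) =>
      hS'.eigenvectorBasis hn' k)).comap (e : E →ₗ[𝕜] E')) (by
        rw [Submodule.comap_equiv_eq_map_symm, LinearEquiv.finrank_map_eq,
          OrthonormalBasis.finrank_span_range_restrict,
          OrthonormalBasis.finrank_span_range_restrict]
        simp only [Set.mem_Iic, Set.mem_Ici, Finset.mem_Iic, Finset.mem_Ici, implies_true,
          Fintype.card_ofFinset, Fin.card_Iic, Fin.card_Ici]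
        omega)
  have hlow := hS.mul_norm_sq_le_re_inner_of_mem_span hn.symm
    (fun k hk => hS.eigenvalues_antitone hn.symm hk) hxS
  have hup := hS'.re_inner_le_mul_norm_sq_of_mem_span hn'
    (fun k hk => hS'.eigenvalues_antitone hn' hk) hxT
  rw [re_inner_adjoint_comp_self_apply, ← f.sq_singularValues_fin hn.symm] at hlow
  rw [re_inner_adjoint_comp_self_apply, ← f'.sq_singularValues_fin hn'] at hup
  have hx : 0 < ‖x‖ := norm_pos_iff.mpr hx0
  have hσ' := f'.singularValues_nonneg i
  have hlow' : f.singularValues i * ‖x‖ ≤ ‖f x‖ :=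
    (pow_le_pow_iff_left₀ (mul_nonneg (f.singularValues_nonneg i) hx.le) (norm_nonneg _)
      two_ne_zero).mp (by rwa [mul_pow])
  have hup' : ‖f' (e x)‖ ≤ f'.singularValues i * ‖e x‖ :=
    (pow_le_pow_iff_left₀ (norm_nonneg _) (mul_nonneg hσ' (norm_nonneg _)) two_ne_zero).mp
      (by rwa [mul_pow])
  refine le_of_mul_le_mul_right ?_ hx
  calc f.singularValues i * ‖x‖ ≤ a * (f'.singularValues i * ‖e x‖) :=
        hlow'.trans ((hf x).trans (mul_le_mul_of_nonneg_left hup' ha))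
    _ ≤ a * (f'.singularValues i * (b * ‖x‖)) := by gcongr; exact he x
    _ = a * b * f'.singularValues i * ‖x‖ := by ring

end LinearMap

lemma Matrix.IsHermitian.toEuclideanLin_eigenvectorBasis {𝕜 : Type*} [RCLike 𝕜] {ι : Type*}
    [Fintype ι] [DecidableEq ι] {A : Matrix ι ι 𝕜} (hA : A.IsHermitian) (j : ι) :
    toEuclideanLin A (hA.eigenvectorBasis j) = (hA.eigenvalues j : 𝕜) • hA.eigenvectorBasis j := by
  rw [toLpLin_apply, hA.mulVec_eigenvectorBasis, RCLike.real_smul_eq_coe_smul (K := 𝕜)]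
  rfl

lemma Matrix.IsHermitian.exists_eigenvalues_eq_of_map_ofReal {ι : Type*} [Fintype ι]
    [DecidableEq ι] {W : Matrix ι ι ℝ} (hW : W.IsHermitian)
    (hWc : (W.map ((↑) : ℝ → ℂ)).IsHermitian) (j : ι) :
    ∃ k, hW.eigenvalues k = hWc.eigenvalues j := by
  have h := AlgHom.spectrum_apply_subset (Complex.ofRealAm.mapMatrix (m := ι)) W
    (hWc.eigenvalues_mem_spectrum_real j)
  rwa [hW.spectrum_real_eq_range_eigenvalues] at h

namespace RT

variable {n m : ℕ}

lemma sortDesc_comp_perm {g : Fin n → ℝ} (hg : Antitone g) (σ : Equiv.Perm (Fin n)) :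
    sortDesc (g ∘ σ) = g := by
  have h := Tuple.unique_monotone (f := fun j => -(g ∘ σ) j) (Tuple.monotone_sort _)
    (τ := σ.symm) (by simpa [Function.comp_def] using hg.neg)
  funext i
  simpa [sortDesc, Function.comp_def] using congrFun h i

lemma singVals_eq_singularValues (M : Matrix (Fin n) (Fin n) ℂ) (i : Fin n) :
    singVals M i = (toEuclideanLin M).singularValues i := by
  have hM := isHermitian_conjTranspose_mul_self M
  set g : Fin n → ℝ := fun j => √(hM.eigenvalues₀ (Fin.cast (Fintype.card_fin n).symm j))
  have hg : Antitone g := fun j k hjk => Real.sqrt_le_sqrt (hM.eigenvalues₀_antitone hjk)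
  have hsort := sortDesc_comp_perm hg
    ((Fintype.equivOfCardEq (Fintype.card_fin _)).symm.trans (finCongr (Fintype.card_fin n)))
  have hσ := (toEuclideanLin M).singularValues_fin finrank_euclideanSpace
    (Fin.cast (Fintype.card_fin n).symm i)
  rw [Fin.val_cast] at hσ
  -- `eigenvalues₀` is already sorted, so `sortDesc` only undoes the reindexing by `equivOfCardEq`.
  rw [show singVals M i = g i by rw [← hsort]; rfl, hσ]
  simp only [g, IsHermitian.eigenvalues₀]
  congr 2
  rw [← toEuclideanLin_conjTranspose_eq_adjoint, toLpLin_mul_same]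

lemma singVals_nonneg (M : Matrix (Fin n) (Fin n) ℂ) (i : Fin n) : 0 ≤ singVals M i := by
  rw [singVals_eq_singularValues]
  exact LinearMap.singularValues_nonneg _ _

lemma singVals_mul_mul_le {A X B : Matrix (Fin n) (Fin n) ℂ} (hB : IsUnit B) {a b : ℝ}
    (ha : 0 ≤ a) (hA : ∀ x, ‖toEuclideanLin A x‖ ≤ a * ‖x‖)
    (hB' : ∀ x, ‖toEuclideanLin B x‖ ≤ b * ‖x‖) (i : Fin n) :
    singVals (A * X * B) i ≤ a * b * singVals X i := by
  have hdet := (isUnit_iff_isUnit_det B).mp hB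
  let e : EuclideanSpace ℂ (Fin n) ≃ₗ[ℂ] EuclideanSpace ℂ (Fin n) :=
    LinearEquiv.ofLinearMap (toEuclideanLin B) (toEuclideanLin B⁻¹)
      (by rw [← toLpLin_mul_same, mul_nonsing_inv B hdet, toLpLin_one])
      (by rw [← toLpLin_mul_same, nonsing_inv_mul B hdet, toLpLin_one])
  rw [singVals_eq_singularValues, singVals_eq_singularValues]
  refine LinearMap.singularValues_le_mul_of_norm_le _ _ e ha (fun x => ?_) hB' i
  rw [toLpLin_mul_same, toLpLin_mul_same]
  exact hA _

section Eigen

variable {𝕜 : Type*} [RCLike 𝕜] {A : Matrix (Fin n) (Fin n) 𝕜}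

lemma eigenvalues_le_eigMax (hA : A.IsHermitian) (j : Fin n) : hA.eigenvalues j ≤ eigMax A := by
  rw [eigMax, dif_pos hA]
  exact le_ciSup (Set.finite_range _).bddAbove j

lemma eigMin_le_eigenvalues (hA : A.IsHermitian) (j : Fin n) : eigMin A ≤ hA.eigenvalues j := by
  rw [eigMin, dif_pos hA]
  exact ciInf_le (Set.finite_range _).bddBelow j

lemma eigMax_nonneg (hA : A.PosDef) : 0 ≤ eigMax A := by
  rw [eigMax, dif_pos hA.1]
  exact Real.iSup_nonneg fun j => (hA.eigenvalues_pos j).le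

lemma eigMin_nonneg (hA : A.PosDef) : 0 ≤ eigMin A := by
  rw [eigMin, dif_pos hA.1]
  exact Real.iInf_nonneg fun j => (hA.eigenvalues_pos j).le

lemma eigMin_pos [Nonempty (Fin n)] (hA : A.PosDef) : 0 < eigMin A := by
  obtain ⟨j, hj⟩ := exists_eq_ciInf_of_finite (f := hA.1.eigenvalues)
  rw [eigMin, dif_pos hA.1, ← hj]
  exact hA.eigenvalues_pos j

end Eigen

section Complexification

variable {W : Matrix (Fin n) (Fin n) ℝ}

lemma abs_eigenvalues_map_ofReal_mem_Icc (hW : W.PosDef)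
    (hWc : (W.map ((↑) : ℝ → ℂ)).IsHermitian) (j : Fin n) :
    |hWc.eigenvalues j| ∈ Set.Icc (eigMin W) (eigMax W) := by
  obtain ⟨k, hk⟩ := hW.1.exists_eigenvalues_eq_of_map_ofReal hWc j
  rw [← hk, abs_of_pos (hW.eigenvalues_pos k)]
  exact ⟨eigMin_le_eigenvalues hW.1 k, eigenvalues_le_eigMax hW.1 k⟩

lemma norm_toEuclideanLin_map_ofReal_le (hW : W.PosDef) (x : EuclideanSpace ℂ (Fin n)) :
    ‖toEuclideanLin (W.map ((↑) : ℝ → ℂ)) x‖ ≤ eigMax W * ‖x‖ := by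
  have hWc := hW.1.map ((↑) : ℝ → ℂ) fun x => (Complex.conj_ofReal x).symm
  exact (isSymmetric_toEuclideanLin_iff.mpr hWc).norm_apply_le_of_abs_le hWc.eigenvectorBasis
    hWc.toEuclideanLin_eigenvectorBasis (eigMax_nonneg hW)
    (fun j => (abs_eigenvalues_map_ofReal_mem_Icc hW hWc j).2) x

lemma norm_toEuclideanLin_inv_map_ofReal_le (hW : W.PosDef) (x : EuclideanSpace ℂ (Fin n)) :
    ‖toEuclideanLin (W.map ((↑) : ℝ → ℂ))⁻¹ x‖ ≤ (eigMin W)⁻¹ * ‖x‖ := by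
  rcases isEmpty_or_nonempty (Fin n) with hn | hn
  · simp [Subsingleton.elim x 0]
  set Wc := W.map ((↑) : ℝ → ℂ)
  have hWc : Wc.IsHermitian := hW.1.map _ fun x => (Complex.conj_ofReal x).symm
  have hdet : IsUnit Wc.det :=
    (isUnit_iff_isUnit_det _).mp (hW.isUnit.map Complex.ofRealHom.mapMatrix)
  have hlow := (isSymmetric_toEuclideanLin_iff.mpr hWc).mul_norm_le_norm_apply
    hWc.eigenvectorBasis hWc.toEuclideanLin_eigenvectorBasis (eigMin_pos hW).le
    (fun j => (abs_eigenvalues_map_ofReal_mem_Icc hW hWc j).1) (toEuclideanLin Wc⁻¹ x)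
  rw [← LinearMap.comp_apply, ← toLpLin_mul_same, mul_nonsing_inv _ hdet, toLpLin_one] at hlow
  rw [inv_mul_eq_div, le_div_iff₀' (eigMin_pos hW)]
  exact hlow

end Complexification

lemma measR_vecMul (a : Fin m → Fin n → ℝ) (W : Matrix (Fin n) (Fin n) ℝ)
    (X : Matrix (Fin n) (Fin n) ℂ) :
    measR (fun j => a j ᵥ* W) X =
      measR a (W.map ((↑) : ℝ → ℂ) * X * (W.map ((↑) : ℝ → ℂ))ᵀ) := by
  funext j
  set Wc := W.map ((↑) : ℝ → ℂ)
  set v : Fin n → ℂ := fun k => (a j k : ℂ)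
  have hcast : (fun k => ((a j ᵥ* W) k : ℂ)) = Wcᵀ *ᵥ v := by
    funext k
    rw [mulVec_transpose]
    exact RingHom.map_vecMul Complex.ofRealHom W (a j) k
  have houter : vecMulVec (Wcᵀ *ᵥ v) (Wcᵀ *ᵥ v) = Wcᵀ * vecMulVec v v * Wc := by
    rw [mul_vecMulVec, vecMulVec_mul, mulVec_transpose]
  simp only [measR]
  rw [hcast, houter, ← Matrix.mul_assoc, ← Matrix.mul_assoc, trace_mul_comm]
  simp only [Matrix.mul_assoc, v]

lemma measR_smul_mul (c : ℝ) (Q : Matrix (Fin m) (Fin n) ℝ) {W : Matrix (Fin n) (Fin n) ℝ}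
    (hW : W.IsHermitian) (X : Matrix (Fin n) (Fin n) ℂ) :
    measR (fun j => c • (Q * W) j) X =
      measR (fun j => c • Q j) (W.map ((↑) : ℝ → ℂ) * X * W.map ((↑) : ℝ → ℂ)) := by
  simp only [mul_apply_eq_vecMul, ← smul_vecMul]
  rw [measR_vecMul, ← transpose_map, ← conjTranspose_eq_transpose_of_trivial, hW.eq]

lemma tailNuc_nonneg (M : Matrix (Fin n) (Fin n) ℂ) (r : ℕ) : 0 ≤ tailNuc M r :=
  Finset.sum_nonneg fun i _ => by split_ifs <;> simp [singVals_nonneg]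

lemma lqNorm_nonneg (q : ℝ) (v : Fin m → ℝ) : 0 ≤ lqNorm q v := by
  unfold lqNorm; positivity

lemma headFro_le_mul {M N : Matrix (Fin n) (Fin n) ℂ} {t : ℝ} (ht : 0 ≤ t)
    (h : ∀ i, singVals M i ≤ t * singVals N i) (r : ℕ) : headFro M r ≤ t * headFro N r := by
  rw [headFro, headFro, ← Real.sqrt_sq ht, ← Real.sqrt_mul (sq_nonneg t), Finset.mul_sum]
  refine Real.sqrt_le_sqrt (Finset.sum_le_sum fun i _ => ?_)
  split_ifs
  · rw [← mul_pow]; exact pow_le_pow_left₀ (singVals_nonneg M i) (h i) 2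
  · simp

lemma tailNuc_le_mul {M N : Matrix (Fin n) (Fin n) ℂ} {t : ℝ}
    (h : ∀ i, singVals M i ≤ t * singVals N i) (r : ℕ) : tailNuc M r ≤ t * tailNuc N r := by
  rw [tailNuc, tailNuc, Finset.mul_sum]
  refine Finset.sum_le_sum fun i _ => ?_
  split_ifs
  · exact h i
  · simp

lemma FrobRobustNSP.mono {A : Matrix (Fin n) (Fin n) ℂ → (Fin m → ℝ)} {q : ℝ} {r : ℕ}
    {ρ ρ' τ τ' : ℝ} (hA : FrobRobustNSP A q r ρ τ) (hρ : ρ ≤ ρ') (hτ : τ ≤ τ') :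
    FrobRobustNSP A q r ρ' τ' := fun M hM =>
  (hA M hM).trans (add_le_add
    (mul_le_mul_of_nonneg_right (div_le_div_of_nonneg_right hρ (Real.sqrt_nonneg _))
      (tailNuc_nonneg M r))
    (mul_le_mul_of_nonneg_right hτ (lqNorm_nonneg q _)))

lemma FrobRobustNSP.of_singVals_le {A A' : Matrix (Fin n) (Fin n) ℂ → (Fin m → ℝ)} {q : ℝ}
    {r : ℕ} {ρ τ a b : ℝ} (hA : FrobRobustNSP A q r ρ τ) (hρ : 0 ≤ ρ) (ha : 0 ≤ a)
    (h : ∀ M : Matrix (Fin n) (Fin n) ℂ, M.IsHermitian → ∃ N : Matrix (Fin n) (Fin n) ℂ,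
      N.IsHermitian ∧ A N = A' M ∧ (∀ i, singVals M i ≤ a * singVals N i) ∧
        ∀ i, singVals N i ≤ b * singVals M i) :
    FrobRobustNSP A' q r (a * b * ρ) (a * τ) := by
  intro M hM
  obtain ⟨N, hN, hAN, hMN, hNM⟩ := h M hM
  calc headFro M r ≤ a * headFro N r := headFro_le_mul ha hMN r
    _ ≤ a * (ρ / √r * tailNuc N r + τ * lqNorm q (A N)) := by gcongr; exact hA N hN
    _ ≤ a * (ρ / √r * (b * tailNuc M r) + τ * lqNorm q (A' M)) := by
      rw [hAN]; gcongr; exact tailNuc_le_mul hNM r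
    _ = a * b * ρ / √r * tailNuc M r + a * τ * lqNorm q (A' M) := by ring

end RT

theorem stmt18_general {m n : ℕ} (q : ℝ) (r : ℕ)
    (Q : Matrix (Fin m) (Fin n) ℝ)
    (W : Matrix (Fin n) (Fin n) ℝ) (hW : W.PosDef)
    (hN : (RT.eigMax W) ^ 2 < 2)
    (τ : ℝ) (hτ : 0 < τ)
    (hG : RT.FrobRobustNSP
      (RT.measR (fun j => Real.sqrt m • (Q * W) j)) q r (1 / 2) τ) :
    RT.FrobRobustNSP (RT.measR (fun j => Real.sqrt m • Q j)) q r
      ((RT.eigMax W / RT.eigMin W) ^ 2 / 2) (2 * τ) := by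
  set Wc := W.map ((↑) : ℝ → ℂ)
  have hWc : Wc.IsHermitian := hW.1.map _ fun x => (Complex.conj_ofReal x).symm
  have hunit : IsUnit Wc := hW.isUnit.map Complex.ofRealHom.mapMatrix
  have hdet : IsUnit Wc.det := (isUnit_iff_isUnit_det _).mp hunit
  have hconj : ∀ M, Wc * (Wc⁻¹ * M * Wc⁻¹) * Wc = M := fun M => by
    simp only [← Matrix.mul_assoc, nonsing_inv_mul_cancel_right _ _ hdet, mul_nonsing_inv _ hdet,
      Matrix.one_mul]
  have hherm : ∀ M : Matrix (Fin n) (Fin n) ℂ, M.IsHermitian → (Wc⁻¹ * M * Wc⁻¹).IsHermitian :=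
    fun M hM => by simpa only [hWc.inv.eq] using isHermitian_conjTranspose_mul_mul Wc⁻¹ hM
  have hup : ∀ M i, RT.singVals M i ≤
      RT.eigMax W * RT.eigMax W * RT.singVals (Wc⁻¹ * M * Wc⁻¹) i := fun M i => by
    conv_lhs => rw [← hconj M]
    exact RT.singVals_mul_mul_le hunit (RT.eigMax_nonneg hW)
      (RT.norm_toEuclideanLin_map_ofReal_le hW) (RT.norm_toEuclideanLin_map_ofReal_le hW) i
  have hdown : ∀ M i, RT.singVals (Wc⁻¹ * M * Wc⁻¹) i ≤
      (RT.eigMin W)⁻¹ * (RT.eigMin W)⁻¹ * RT.singVals M i :=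
    fun _ => RT.singVals_mul_mul_le (isUnit_nonsing_inv_iff.mpr hunit)
      (inv_nonneg.mpr (RT.eigMin_nonneg hW)) (RT.norm_toEuclideanLin_inv_map_ofReal_le hW)
      (RT.norm_toEuclideanLin_inv_map_ofReal_le hW)
  have hNSP := RT.FrobRobustNSP.of_singVals_le hG (by norm_num) (mul_self_nonneg _)
    fun M hM => ⟨Wc⁻¹ * M * Wc⁻¹, hherm M hM, by rw [RT.measR_smul_mul _ _ hW.1, hconj],
      hup M, hdown M⟩
  exact hNSP.mono (le_of_eq (by ring))
    (mul_le_mul_of_nonneg_right (by rw [← sq]; exact hN.le) hτ.le)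

theorem stmt18 {m n : ℕ} (q : ℝ) (hq : 1 ≤ q) (r : ℕ)
    (Q : Matrix (Fin m) (Fin n) ℝ) (hQ : Qᵀ * Q = 1)
    (W : Matrix (Fin n) (Fin n) ℝ) (hW : W.PosDef)
    (hκ : (RT.eigMax W / RT.eigMin W) ^ 2 < 2) (hN : (RT.eigMax W) ^ 2 < 2)
    (τ : ℝ) (hτ : 0 < τ)
    (hG : RT.FrobRobustNSP
      (RT.measR (fun j => Real.sqrt m • (Q * W) j)) q r (1 / 2) τ) :
    RT.FrobRobustNSP (RT.measR (fun j => Real.sqrt m • Q j)) q r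
      ((RT.eigMax W / RT.eigMin W) ^ 2 / 2) (2 * τ) :=
  stmt18_general q r Q W hW hN τ hτ hG
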